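/- Mutual inverse of defunctionalization and refunctionalization: for every well-formed program P of the symmetric data/codata calculus and every type T declared in P with polarity p such that P contains no local pattern matches on T, applying the polarity-switching transformation 𝒳fun_p̂ (for the flipped polarity p̂) after 𝒳fun_p yields the original program: 𝒳fun_{p̂}^T(𝒳fun_p^T(P)) = P. -/

import Mathlib

namespace SymCalc

/-! Basic syntactic categories of the symmetric data/codata calculus (CPS fragment). -/

abbrev Var := String
abbrev TName := String
abbrev XName := String

inductive Polarity | dat | cod
deriving DecidableEq, Repr

inductive Orientation | prd | con
deriving DecidableEq, Repr

inductive Strategy | cbv | cbn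
deriving DecidableEq, Repr

def Polarity.flip : Polarity → Polarity
  | .dat => .cod | .cod => .dat

def Orientation.flip : Orientation → Orientation
  | .prd => .con | .con => .prd

def Strategy.flip : Strategy → Strategy
  | .cbv => .cbn | .cbn => .cbv

/-- `val p` : the orientation of the canonical xtors of a type of polarity `p`. -/
def Polarity.val : Polarity → Orientation
  | .dat => .prd | .cod => .con

/-- `cnt p` : the orientation of (co)pattern matches on a type of polarity `p`. -/
def Polarity.cnt : Polarity → Orientation
  | .dat => .con | .cod => .prd

/-- Typing contexts: each variable carries an orientation (producer/consumer) and a type name.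
The head of the list is the innermost binding. -/
abbrev Ctx := List (Var × Orientation × TName)

/-- Erase the variable names of a context, keeping orientations and types. -/
def eraseCtx (Γ : Ctx) : List (Orientation × TName) := Γ.map (·.2)

mutual
/-- Expressions `e ::= x | 𝒳σ | match_p T { 𝒳Δ ⇒ c; … }`. -/
inductive Expr : Type
  | var : Var → Expr
  | xtor : XName → List Expr → Expr
  | mtch : Polarity → TName → List (XName × Ctx × Cmd) → Expr
/-- Commands `c ::= e₁ ≫ e₂ | Done`. -/
inductive Cmd : Type
  | cut : Expr → Expr → Cmd
  | done : Cmd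
end

/-! Substitution. -/

abbrev Env := List (Var × Expr)

/-- Remove the bindings shadowed by the bound variables `xs`. -/
def shadowV (xs : List Var) (m : Env) : Env :=
  m.filter (fun q => ¬ xs.contains q.1)

mutual
/-- Substitute the (closed) expressions of `m` for free variables in an expression. -/
def substExpr (m : Env) : Expr → Expr
  | .var x => (m.lookup x).getD (.var x)
  | .xtor n σ => .xtor n (σ.attach.map (fun ⟨e, _⟩ => substExpr m e))
  | .mtch p T cases =>
      .mtch p T (cases.attach.map
        (fun ⟨cs, _⟩ => (cs.1, cs.2.1, substCmd (shadowV (cs.2.1.map (·.1)) m) cs.2.2)))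
termination_by e => sizeOf e
decreasing_by
  · have h := List.sizeOf_lt_of_mem ‹e ∈ σ›
    simp only [Expr.xtor.sizeOf_spec]; omega
  · have h := List.sizeOf_lt_of_mem ‹cs ∈ cases›
    obtain ⟨n', Δ', c'⟩ := cs
    simp only [Expr.mtch.sizeOf_spec, Prod.mk.sizeOf_spec] at h ⊢; omega
/-- Substitute the (closed) expressions of `m` for free variables in a command. -/
def substCmd (m : Env) : Cmd → Cmd
  | .cut e₁ e₂ => .cut (substExpr m e₁) (substExpr m e₂)
  | .done => .done
termination_by c => sizeOf c
decreasing_by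
  · simp only [Cmd.cut.sizeOf_spec]; omega
  · simp only [Cmd.cut.sizeOf_spec]; omega
end

/-- Pair the variables of a context with the expressions of a substitution. -/
def bindArgs (Δ : Ctx) (σ : List Expr) : Env := List.zip (Δ.map (·.1)) σ

/-! Programs. -/

/-- A function declaration `𝒳Π := match_p T { 𝒴Δ ⇒ c; … }` (co)pattern matching on
all xtors of the type it belongs to. -/
structure FunDecl where
  name : XName
  args : Ctx
  cases : List (XName × Ctx × Cmd)

/-- A type declaration `s p type T { 𝒳Δ; … } with f₁ … fₙ`. -/
structure TypeDecl where
  strat : Strategy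
  pol : Polarity
  name : TName
  xtors : List (XName × Ctx)
  funs : List FunDecl

/-- A program: a list of type declarations together with a top-level command. -/
structure Program where
  decls : List TypeDecl
  main : Cmd

def Program.findType (P : Program) (T : TName) : Option TypeDecl :=
  P.decls.find? (fun td => td.name = T)

/-! Typing. -/

mutual
/-- Expression typing `Γ ⊢ e :ᵒ T` (producer/consumer typing). -/
inductive HasTy (P : Program) : Ctx → Expr → Orientation → TName → Prop
  | var : ∀ Γ x o T, Γ.lookup x = some (o, T) → HasTy P Γ (.var x) o T
  | xtor : ∀ Γ td X Δ τ, td ∈ P.decls → (X, Δ) ∈ td.xtors →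
      SubstTy P Γ τ Δ → HasTy P Γ (.xtor X τ) td.pol.val td.name
  | fn : ∀ Γ td f τ, td ∈ P.decls → f ∈ td.funs →
      SubstTy P Γ τ f.args → HasTy P Γ (.xtor f.name τ) td.pol.cnt td.name
  | mtch : ∀ Γ td cases, td ∈ P.decls →
      cases.map (fun cs => (cs.1, eraseCtx cs.2.1)) = td.xtors.map (fun g => (g.1, eraseCtx g.2)) →
      (∀ cs ∈ cases, CmdTy P (cs.2.1 ++ Γ) cs.2.2) →
      HasTy P Γ (.mtch td.pol td.name cases) td.pol.cnt td.name
/-- Substitution typing `Γ ⊢ σ : Δ`. -/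
inductive SubstTy (P : Program) : Ctx → List Expr → Ctx → Prop
  | nil : ∀ Γ, SubstTy P Γ [] []
  | cons : ∀ Γ σ Δ e x o T, SubstTy P Γ σ Δ → HasTy P Γ e o T →
      SubstTy P Γ (e :: σ) ((x, o, T) :: Δ)
/-- Command typing `Γ ⊢ c :cmd`. -/
inductive CmdTy (P : Program) : Ctx → Cmd → Prop
  | cut : ∀ Γ e₁ e₂ T, HasTy P Γ e₁ .prd T → HasTy P Γ e₂ .con T → CmdTy P Γ (.cut e₁ e₂)
  | done : ∀ Γ, CmdTy P Γ .done
end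

/-! Operational semantics. -/

/-- One-step reduction of closed commands, relative to a program `P`. -/
inductive Step (P : Program) : Cmd → Cmd → Prop
  | mtch : ∀ X σ T cases Δ c, (X, Δ, c) ∈ cases →
      Step P (.cut (.xtor X σ) (.mtch .dat T cases)) (substCmd (bindArgs Δ σ) c)
  | comtch : ∀ X σ T cases Δ c, (X, Δ, c) ∈ cases →
      Step P (.cut (.mtch .cod T cases) (.xtor X σ)) (substCmd (bindArgs Δ σ) c)
  | conCall : ∀ td f Y Δ c σ τ, td ∈ P.decls → td.pol = .dat → f ∈ td.funs →
      (Y, Δ, c) ∈ f.cases →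
      Step P (.cut (.xtor Y τ) (.xtor f.name σ))
        (substCmd (bindArgs f.args σ) (substCmd (bindArgs Δ τ) c))
  | prdCall : ∀ td f Y Δ c σ τ, td ∈ P.decls → td.pol = .cod → f ∈ td.funs →
      (Y, Δ, c) ∈ f.cases →
      Step P (.cut (.xtor f.name σ) (.xtor Y τ))
        (substCmd (bindArgs f.args σ) (substCmd (bindArgs Δ τ) c))

/-! Well-formedness of programs. -/

/-- Well-formedness of a function declaration belonging to the type declaration `td`
(rule Wf-Fun): the (co)pattern match is exhaustive, binds exactly the declared
argument contexts, and each case body typechecks. -/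
def FunWf (P : Program) (td : TypeDecl) (f : FunDecl) : Prop :=
  f.cases.map (fun cs => (cs.1, cs.2.1)) = td.xtors ∧
  ∀ cs ∈ f.cases, CmdTy P (cs.2.1 ++ f.args) cs.2.2

/-- All names used in a program are unambiguous. -/
def NamesUnambiguous (P : Program) : Prop :=
  (P.decls.map (·.name)).Nodup ∧
  (P.decls.flatMap (fun td => td.xtors.map (·.1) ++ td.funs.map (·.name))).Nodup

/-- Well-formedness of programs (rules Wf-Prog and Wf-Type). -/
def Program.wf (P : Program) : Prop :=
  NamesUnambiguous P ∧
  (∀ td ∈ P.decls, ∀ f ∈ td.funs, FunWf P td f) ∧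
  CmdTy P [] P.main


/-! No local pattern matches on a type `T`. -/

mutual
/-- The expression contains no local (co)pattern match on the type `T`. -/
inductive ENoM (T : TName) : Expr → Prop
  | var : ∀ x, ENoM T (.var x)
  | xtor : ∀ n σ, (∀ e ∈ σ, ENoM T e) → ENoM T (.xtor n σ)
  | mtch : ∀ p T' cases, T' ≠ T → (∀ cs ∈ cases, CNoM T cs.2.2) → ENoM T (.mtch p T' cases)
/-- The command contains no local (co)pattern match on the type `T`. -/
inductive CNoM (T : TName) : Cmd → Prop
  | cut : ∀ e₁ e₂, ENoM T e₁ → ENoM T e₂ → CNoM T (.cut e₁ e₂)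
  | done : CNoM T .done
end

/-- The program contains no local (co)pattern matches on the type `T`. -/
def ProgNoLocalMatch (T : TName) (P : Program) : Prop :=
  (∀ td ∈ P.decls, ∀ f ∈ td.funs, ∀ cs ∈ f.cases, CNoM T cs.2.2) ∧ CNoM T P.main

/-! Core de/refunctionalization `𝒳fun_p^T`: matrix transposition of the declaration of `T`. -/

/-- Look up the body of the case for the xtor `X` in a list of cases. -/
def lookupBody (cases : List (XName × Ctx × Cmd)) (X : XName) : Cmd :=
  match cases.find? (fun cs => cs.1 = X) with
  | some cs => cs.2.2
  | none => .done

/-- Transpose the matrix of a type declaration: the former functions become the xtors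
of the new declaration (with flipped polarity and the same evaluation strategy) and the
former xtors become its functions, each case body being the corresponding matrix entry.
`𝒳fun_p` transforms a type of polarity `p` into one of polarity `p̂`. -/
def transposeDecl (p : Polarity) (td : TypeDecl) : TypeDecl where
  strat := td.strat
  pol := p.flip
  name := td.name
  xtors := td.funs.map (fun f => (f.name, f.args))
  funs := td.xtors.map (fun g =>
    { name := g.1, args := g.2,
      cases := td.funs.map (fun f => (f.name, f.args, lookupBody f.cases g.1)) })

/-- Core de/refunctionalization `𝒳fun_p^T`: the identity on all terms and on all type
declarations other than that of `T`, whose declaration is transposed. -/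
def xfun (p : Polarity) (T : TName) (P : Program) : Program where
  decls := P.decls.map (fun td => if td.name = T then transposeDecl p td else td)
  main := P.main

/-! Transposing a matrix twice gives it back. The only work is that the entries of the transposed
matrix are read back by name through `lookupBody`: this needs the xtor names and the function
names of `T` to be distinct, which the unambiguity of names in a well-formed program provides,
and every function to list its cases in the order of the xtors, which is rule Wf-Fun. -/

@[simp]
theorem Polarity.flip_flip (p : Polarity) : p.flip.flip = p := by
  cases p <;> rfl

theorem lookupBody_of_mem {cases : List (XName × Ctx × Cmd)} {X : XName} {Δ : Ctx} {c : Cmd}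
    (hnd : (cases.map (·.1)).Nodup) (h : (X, Δ, c) ∈ cases) : lookupBody cases X = c := by
  unfold lookupBody
  split
  case h_1 cs hfind =>
    have hX : cs.1 = X := by simpa using List.find?_some hfind
    exact congrArg (·.2.2) (List.inj_on_of_nodup_map hnd (List.mem_of_find?_eq_some hfind) h hX)
  case h_2 hfind =>
    exact absurd (List.find?_eq_none.1 hfind _ h) (by simp)

theorem map_lookupBody_eq_self {cases : List (XName × Ctx × Cmd)} (hnd : (cases.map (·.1)).Nodup) :
    cases.map (fun cs => (cs.1, cs.2.1, lookupBody cases cs.1)) = cases :=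
  List.map_congr_left (fun ⟨_, _, _⟩ h => by rw [lookupBody_of_mem hnd h]; rfl) |>.trans (List.map_id _)

theorem transposeDecl_transposeDecl {td : TypeDecl} {p : Polarity} (hpol : td.pol = p)
    (hxtors : (td.xtors.map (·.1)).Nodup) (hfuns : (td.funs.map (·.name)).Nodup)
    (hcases : ∀ f ∈ td.funs, f.cases.map (fun cs => (cs.1, cs.2.1)) = td.xtors) :
    transposeDecl p.flip (transposeDecl p td) = td := by
  obtain ⟨s, q, T, xtors, funs⟩ := td
  subst hpol
  dsimp only at hxtors hfuns hcases
  have hrow : ∀ f ∈ funs, FunDecl.mk f.name f.args (xtors.map fun g =>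
      (g.1, g.2, lookupBody (funs.map fun f' => (f'.name, f'.args, lookupBody f'.cases g.1)) f.name))
      = f := by
    intro f hf
    have hentry : ∀ X, lookupBody (funs.map fun f' => (f'.name, f'.args, lookupBody f'.cases X))
        f.name = lookupBody f.cases X := fun X =>
      lookupBody_of_mem (by rwa [List.map_map]) (List.mem_map_of_mem hf)
    have hkeys : (f.cases.map (·.1)).Nodup := by
      rwa [← hcases f hf, List.map_map] at hxtors
    simp only [hentry]
    rw [← hcases f hf, List.map_map]
    simp only [Function.comp_def, map_lookupBody_eq_self hkeys]
  simp only [transposeDecl, Polarity.flip_flip, List.map_map, Function.comp_def, TypeDecl.mk.injEq,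
    true_and]
  exact ⟨List.map_id' _, (List.map_congr_left hrow).trans (List.map_id _)⟩

@[simp]
theorem transposeDecl_name (p : Polarity) (td : TypeDecl) : (transposeDecl p td).name = td.name :=
  rfl

theorem xfun_flip_xfun {P : Program} {T : TName} {p : Polarity}
    (h : ∀ td ∈ P.decls, td.name = T → transposeDecl p.flip (transposeDecl p td) = td) :
    xfun p.flip T (xfun p T P) = P := by
  obtain ⟨decls, main⟩ := P
  simp only [xfun, List.map_map, Program.mk.injEq, and_true]
  refine (List.map_congr_left fun td htd => ?_).trans (List.map_id _)
  by_cases hT : td.name = T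
  · simp [hT, h td htd hT]
  · simp [hT]

/-- **Mutual inverse** (Theorem 4.1): for every well-formed program `P` and type `T`
declared in `P` with polarity `p` (and no local pattern matches on `T` in `P`),
`𝒳fun_{p̂}^T (𝒳fun_p^T P) = P`. -/
theorem xfun_mutual_inverse (P : Program) (hP : P.wf) (T : TName) (p : Polarity)
    (hT : ∃ td ∈ P.decls, td.name = T ∧ td.pol = p)
    (hloc : ProgNoLocalMatch T P) :
    xfun p.flip T (xfun p T P) = P := by
  obtain ⟨td₀, htd₀, rfl, hpol⟩ := hT
  obtain ⟨⟨htypes, hxtors⟩, hfuns, -⟩ := hP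
  refine xfun_flip_xfun fun td htd hname => ?_
  obtain rfl : td = td₀ := List.inj_on_of_nodup_map htypes htd htd₀ hname
  have hnames := (List.nodup_flatMap.1 hxtors).1 td htd
  exact transposeDecl_transposeDecl hpol (List.nodup_append.1 hnames).1
    (List.nodup_append.1 hnames).2.1 fun f hf => (hfuns td htd f hf).1

end SymCalc
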